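/- Fix k ∈ ℕ. On ℝ with the standard dyadic grid, let 𝒦 := {L_{(j)} : L ∈ 𝒟, L^{(k)} = [0,1), 0 ≤ j ≤ k}, where L_{(j)} is the unique dyadic interval with (L_{(j)})^{(j)} = L and inf L_{(j)} = inf L. Let f := 2^k ∑_{L : L^{(k)}=[0,1)} 1_{L_{(k)}}. Then ∑_{K∈𝒦} (1_{K^{(k)}}/|K^{(k)}|) ∫_K f = (k+1)·1_{[0,1)} pointwise on ℝ. -/

import Mathlib

open MeasureTheory Finset

/-!
For `K = L_{(j)}` the interval `L_{(k)}` is the only one on which `f = 2^k` that meets `K`, and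
it lies inside `K`, so `∫_K f = 2^k · 4^{-k} = 2^{-k}`. For fixed `j` the ancestors `K^{(k)}` run
through the `2^j` dyadic intervals of length `2^{-j}` in `[0,1)`, each `2^{k-j}` times, so level
`j` contributes `2^{k-j} · 2^j · 2^{-k} · 1_{[0,1)} = 1_{[0,1)}`; there are `k + 1` levels.
-/

/-- The dyadic interval `K = L_{(j)} = [i·2^{-k}, i·2^{-k} + 2^{-k-j})`, where
`L = [i·2^{-k}, (i+1)·2^{-k})` is a dyadic interval with `L^{(k)} = [0,1)`. -/
noncomputable def Kint (k i j : ℕ) : Set ℝ :=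
  Set.Ico ((i : ℝ) / 2 ^ k) ((i : ℝ) / 2 ^ k + 1 / (2 ^ k * 2 ^ j))

/-- The `k`-generations-older dyadic ancestor `K^{(k)}` of `K = Kint k i j`;
it has length `2^{-j}` and left endpoint `⌊i/2^{k-j}⌋·2^{-j}`. -/
noncomputable def KintAnc (k i j : ℕ) : Set ℝ :=
  Set.Ico ((↑(i / 2 ^ (k - j)) : ℝ) / 2 ^ j) ((↑(i / 2 ^ (k - j)) : ℝ) / 2 ^ j + 1 / 2 ^ j)

def gridCell (n : ℝ) (c : ℕ) : Set ℝ := Set.Ico (c / n) (c / n + 1 / n)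

lemma mem_gridCell_iff {n : ℝ} (hn : 0 < n) {x : ℝ} {c : ℕ} :
    x ∈ gridCell n c ↔ 0 ≤ x ∧ ⌊x * n⌋₊ = c := by
  constructor
  · rintro ⟨h₁, h₂⟩
    have hx : 0 ≤ x := (div_nonneg c.cast_nonneg hn.le).trans h₁
    refine ⟨hx, (Nat.floor_eq_iff (by positivity)).2 ⟨?_, ?_⟩⟩
    · rwa [div_le_iff₀ hn] at h₁
    · rwa [← add_div, lt_div_iff₀ hn] at h₂
  · rintro ⟨hx, rfl⟩
    obtain ⟨h₁, h₂⟩ := (Nat.floor_eq_iff (by positivity)).1 (rfl : ⌊x * n⌋₊ = _)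
    exact ⟨by rwa [div_le_iff₀ hn], by rwa [← add_div, lt_div_iff₀ hn]⟩

lemma gridCell_disjoint {n : ℝ} (hn : 0 < n) {c c' : ℕ} (h : c ≠ c') :
    Disjoint (gridCell n c) (gridCell n c') :=
  Set.disjoint_left.2 fun _ hx hx' =>
    h (((mem_gridCell_iff hn).1 hx).2.symm.trans ((mem_gridCell_iff hn).1 hx').2)

lemma sum_indicator_gridCell {n : ℕ} (hn : 0 < n) (x : ℝ) :
    ∑ c ∈ range n, (gridCell n c).indicator (fun _ => (1 : ℝ)) x
      = (Set.Ico (0 : ℝ) 1).indicator (fun _ => (1 : ℝ)) x := by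
  classical
  have hn' : (0 : ℝ) < n := by exact_mod_cast hn
  simp only [Set.indicator_apply, mem_gridCell_iff hn', Set.mem_Ico]
  by_cases hx : 0 ≤ x
  · have : ⌊x * n⌋₊ < n ↔ x < 1 := by
      rw [Nat.floor_lt (by positivity), mul_lt_iff_lt_one_left hn']
    simp [hx, Finset.sum_ite_eq, this]
  · simp [hx]

lemma sum_range_mul_comp_div {β : Type*} [AddCommMonoid β] (g : ℕ → β) (a m : ℕ) :
    ∑ i ∈ range (a * m), g (i / m) = m • ∑ c ∈ range a, g c := by
  induction a with
  | zero => simp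
  | succ a ih =>
    rcases m.eq_zero_or_pos with rfl | hm
    · simp
    have : ∀ r ∈ range m, (a * m + r) / m = a := fun r hr => by
      rw [Nat.add_comm, Nat.add_mul_div_right _ _ hm, Nat.div_eq_of_lt (mem_range.1 hr),
        zero_add]
    rw [Nat.succ_mul, sum_range_add, ih, sum_congr rfl fun r hr => congrArg g (this r hr),
      sum_const, card_range, sum_range_succ, smul_add]

lemma sum_indicator_KintAnc {k j : ℕ} (hj : j ≤ k) (x : ℝ) :
    ∑ i ∈ range (2 ^ k), (KintAnc k i j).indicator (fun _ => (1 : ℝ)) x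
      = 2 ^ (k - j) * (Set.Ico (0 : ℝ) 1).indicator (fun _ => (1 : ℝ)) x := by
  have hcell : ∀ i, KintAnc k i j = gridCell ((2 ^ j : ℕ) : ℝ) (i / 2 ^ (k - j)) := by
    simp [KintAnc, gridCell]
  have hk : 2 ^ k = 2 ^ j * 2 ^ (k - j) := by rw [← pow_add, Nat.add_sub_of_le hj]
  simp only [hk, hcell]
  rw [sum_range_mul_comp_div (fun c => (gridCell _ c).indicator _ x),
    sum_indicator_gridCell (by positivity), nsmul_eq_mul, Nat.cast_pow, Nat.cast_ofNat]

lemma Ico_subset_gridCell {n ε : ℝ} (c : ℕ) (h : ε ≤ 1 / n) :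
    Set.Ico (c / n) (c / n + ε) ⊆ gridCell n c :=
  Set.Ico_subset_Ico_right (by linarith)

lemma setIntegral_Kint {k i j : ℕ} (hi : i < 2 ^ k) (hj : j ≤ k) :
    ∫ y in Kint k i j, 2 ^ k * ∑ i' ∈ range (2 ^ k),
        (Set.Ico ((i' : ℝ) / 2 ^ k) ((i' : ℝ) / 2 ^ k + 1 / 4 ^ k)).indicator
          (fun _ => (1 : ℝ)) y
      = 1 / 2 ^ k := by
  set A : ℕ → Set ℝ := fun i' => Set.Ico ((i' : ℝ) / 2 ^ k) ((i' : ℝ) / 2 ^ k + 1 / 4 ^ k)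
  have h4 : (4 : ℝ) ^ k = 2 ^ k * 2 ^ k := by rw [← mul_pow]; norm_num
  have hA_len : (1 : ℝ) / 4 ^ k ≤ 1 / (2 ^ k * 2 ^ j) := by
    rw [h4]; gcongr; norm_num
  have hK_len : (1 : ℝ) / (2 ^ k * 2 ^ j) ≤ 1 / 2 ^ k :=
    one_div_le_one_div_of_le (by positivity)
      (le_mul_of_one_le_right (by positivity) (one_le_pow₀ (by norm_num)))
  have hA_sub : ∀ i', A i' ⊆ gridCell (2 ^ k) i' := fun i' =>
    Ico_subset_gridCell i' (hA_len.trans hK_len)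
  have hA_Kint : A i ⊆ Kint k i j := Set.Ico_subset_Ico_right (by linarith)
  have hK_sub : Kint k i j ⊆ gridCell (2 ^ k) i := Ico_subset_gridCell i hK_len
  have hf : Set.EqOn
      (fun y => 2 ^ k * ∑ i' ∈ range (2 ^ k), (A i').indicator (fun _ => (1 : ℝ)) y)
      (fun y => 2 ^ k * (A i).indicator (fun _ => (1 : ℝ)) y) (Kint k i j) := fun y hy => by
    refine congrArg _ (sum_eq_single_of_mem i (mem_range.2 hi) fun i' _ hne => ?_)
    refine Set.indicator_of_notMem (fun hy' => ?_) _
    exact Set.disjoint_left.1 (gridCell_disjoint (by positivity) hne) (hA_sub i' hy') (hK_sub hy)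
  refine (setIntegral_congr_fun (s := Kint k i j) measurableSet_Ico hf).trans ?_
  rw [integral_const_mul, setIntegral_indicator (s := Kint k i j) (t := A i) measurableSet_Ico,
    Set.inter_eq_right.2 hA_Kint, setIntegral_const,
    Real.volume_real_Ico_of_le (le_add_of_nonneg_right (by positivity)), add_sub_cancel_left,
    smul_eq_mul, mul_one, h4]
  field_simp

/-- with `𝒦 = {L_{(j)} : L^{(k)} = [0,1), 0 ≤ j ≤ k}` and
`f = 2^k ∑_{L : L^{(k)} = [0,1)} 1_{L_{(k)}}`, we have
`∑_{K ∈ 𝒦} (1_{K^{(k)}}/|K^{(k)}|) ∫_K f = (k+1)·1_{[0,1)}` pointwise on `ℝ`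
(here `1/|K^{(k)}| = 2^j`). -/
theorem stmt7 (k : ℕ) :
    let f : ℝ → ℝ := fun x => 2 ^ k *
      ∑ i ∈ range (2 ^ k),
        (Set.Ico ((i : ℝ) / 2 ^ k) ((i : ℝ) / 2 ^ k + 1 / 4 ^ k)).indicator
          (fun _ => (1 : ℝ)) x
    ∀ x : ℝ,
      ∑ i ∈ range (2 ^ k), ∑ j ∈ range (k + 1),
          (KintAnc k i j).indicator (fun _ => (1 : ℝ)) x * 2 ^ j *
            ∫ y in Kint k i j, f y
        = (k + 1) * (Set.Ico (0 : ℝ) 1).indicator (fun _ => (1 : ℝ)) x := by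
  intro f x
  have hlevel : ∀ j ∈ range (k + 1),
      ∑ i ∈ range (2 ^ k), (KintAnc k i j).indicator (fun _ => (1 : ℝ)) x * 2 ^ j *
          ∫ y in Kint k i j, f y
        = (Set.Ico (0 : ℝ) 1).indicator (fun _ => (1 : ℝ)) x := fun j hj => by
    have hj : j ≤ k := Nat.lt_succ_iff.1 (mem_range.1 hj)
    have hpow : (2 : ℝ) ^ (k - j) * 2 ^ j = 2 ^ k := by rw [← pow_add, Nat.sub_add_cancel hj]
    calc _ = ∑ i ∈ range (2 ^ k),
            (KintAnc k i j).indicator (fun _ => (1 : ℝ)) x * (2 ^ j / 2 ^ k) :=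
          sum_congr rfl fun i hi => by rw [setIntegral_Kint (mem_range.1 hi) hj]; ring
      _ = (Set.Ico (0 : ℝ) 1).indicator (fun _ => (1 : ℝ)) x *
            (2 ^ (k - j) * 2 ^ j / 2 ^ k) := by
          rw [← sum_mul, sum_indicator_KintAnc hj]; ring
      _ = _ := by rw [hpow, div_self (by positivity), mul_one]
  rw [sum_comm, sum_congr rfl hlevel, sum_const, card_range, nsmul_eq_mul]
  push_cast
  ring
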